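/- arXiv:1401.1602 — 4 statements merged into one kernel-verified Lean document; each statement's English description precedes it below -/
import Mathlib

section
/- Let n ≥ 1, let A = (a_{i,j})_{i,j=1,…,n} be a real n×n matrix, and let f : [0,1)² → ℝ be the piecewise constant function with f(x,y) = a_{i,j} whenever (x,y) ∈ [(i−1)/n, i/n) × [(j−1)/n, j/n). Then for every copula measure μ on [0,1)², the integral ∫_{[0,1)²} f dμ is at most (1/n) · max over all permutations π of {1,…,n} of ∑_{i=1}^n a_{i,π(i)}. -/
open MeasureTheory Set

/-- A copula measure: a probability measure on the plane whose marginals are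
Lebesgue measure restricted to `[0,1)`. -/
def IsCopulaMeasure (μ : Measure (ℝ × ℝ)) : Prop :=
  IsProbabilityMeasure μ ∧
  μ.map Prod.fst = volume.restrict (Ico (0:ℝ) 1) ∧
  μ.map Prod.snd = volume.restrict (Ico (0:ℝ) 1)

/-- The half-open grid cell `[(i)/m, (i+1)/m) × [(j)/m, (j+1)/m)` (0-indexed). -/
def gridCell (m : ℕ) (i j : Fin m) : Set (ℝ × ℝ) :=
  Ico (((i : ℕ) : ℝ) / m) ((((i : ℕ) : ℝ) + 1) / m) ×ˢ
    Ico (((j : ℕ) : ℝ) / m) ((((j : ℕ) : ℝ) + 1) / m)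

/-- The closure of the grid cell. -/
def closedCell (m : ℕ) (i j : Fin m) : Set (ℝ × ℝ) :=
  Icc (((i : ℕ) : ℝ) / m) ((((i : ℕ) : ℝ) + 1) / m) ×ˢ
    Icc (((j : ℕ) : ℝ) / m) ((((j : ℕ) : ℝ) + 1) / m)

/-!
The masses `w i j = μ(gridCell n i j)` determine the integral, `∫ f dμ = ∑ a i j * w i j`, and
since the marginals of `μ` are uniform every row and every column of `w` has total mass `1 / n`.
Hence `n • w` is doubly stochastic, so by Birkhoff's theorem it is a convex combination of
permutation matrices; the linear functional `M ↦ ∑ a i j * M i j` is therefore bounded on it by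
its largest value at a permutation matrix, which is `max_π ∑ a i (π i)`.
-/

open Function

theorem Equiv.Perm.sum_sum_mul_permMatrix {ι R : Type*} [Fintype ι] [DecidableEq ι]
    [NonAssocSemiring R] (σ : Equiv.Perm ι) (a : ι → ι → R) :
    ∑ i, ∑ j, a i j * σ.permMatrix R i j = ∑ i, a i (σ i) := by
  simp [Equiv.Perm.permMatrix, PEquiv.toMatrix_apply, Equiv.toPEquiv_apply]

theorem sum_sum_mul_le_iSup_perm_of_mem_doublyStochastic {ι : Type*} [Fintype ι]
    [DecidableEq ι] (a : ι → ι → ℝ) {M : Matrix ι ι ℝ} (hM : M ∈ doublyStochastic ℝ ι) :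
    ∑ i, ∑ j, a i j * M i j ≤ ⨆ σ : Equiv.Perm ι, ∑ i, a i (σ i) := by
  let φ : Matrix ι ι ℝ →ₗ[ℝ] ℝ :=
    { toFun := fun M => ∑ i, ∑ j, a i j * M i j
      map_add' := fun M N => by simp [mul_add, Finset.sum_add_distrib]
      map_smul' := fun c M => by simp [Finset.mul_sum, mul_left_comm] }
  rw [← SetLike.mem_coe, doublyStochastic_eq_convexHull_permMatrix] at hM
  obtain ⟨_, ⟨σ, rfl⟩, hσ⟩ :=
    (φ.convexOn convex_univ).exists_ge_of_mem_convexHull (subset_univ _) hM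
  calc φ M ≤ φ (σ.permMatrix ℝ) := hσ
    _ = ∑ i, a i (σ i) := σ.sum_sum_mul_permMatrix a
    _ ≤ ⨆ τ : Equiv.Perm ι, ∑ i, a i (τ i) :=
      le_ciSup (f := fun τ : Equiv.Perm ι => ∑ i, a i (τ i)) (finite_range _).bddAbove σ

def gridInterval (n : ℕ) (i : Fin n) : Set ℝ :=
  Ico (((i : ℕ) : ℝ) / n) ((((i : ℕ) : ℝ) + 1) / n)

section gridInterval

variable {n : ℕ}

theorem gridCell_eq_prod (i j : Fin n) :
    gridCell n i j = gridInterval n i ×ˢ gridInterval n j := rfl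

theorem measurableSet_gridInterval (i : Fin n) : MeasurableSet (gridInterval n i) :=
  measurableSet_Ico

theorem volume_gridInterval (i : Fin n) : volume (gridInterval n i) = ENNReal.ofReal (1 / n) := by
  rw [gridInterval, Real.volume_Ico, add_div, add_sub_cancel_left]

theorem mem_gridInterval_iff (hn : 0 < n) {x : ℝ} {i : Fin n} :
    x ∈ gridInterval n i ↔ 0 ≤ x ∧ ⌊x * n⌋₊ = i := by
  have hn' : (0 : ℝ) < n := by exact_mod_cast hn
  rw [gridInterval, mem_Ico, div_le_iff₀ hn', lt_div_iff₀ hn']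
  constructor
  · rintro ⟨h1, h2⟩
    have hx : 0 ≤ x := nonneg_of_mul_nonneg_left ((Nat.cast_nonneg _).trans h1) hn'
    exact ⟨hx, (Nat.floor_eq_iff (by positivity)).2 ⟨h1, h2⟩⟩
  · rintro ⟨hx, hi⟩
    rw [← hi]
    exact ⟨Nat.floor_le (by positivity), Nat.lt_floor_add_one _⟩

theorem gridInterval_subset_Ico (i : Fin n) : gridInterval n i ⊆ Ico 0 1 := by
  have hi : ((i : ℕ) : ℝ) + 1 ≤ n := by exact_mod_cast i.2
  intro x ⟨h1, h2⟩
  refine ⟨le_trans (by positivity) h1, h2.trans_le ?_⟩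
  exact div_le_one_of_le₀ hi (Nat.cast_nonneg n)

theorem pairwise_disjoint_gridInterval : Pairwise (Disjoint on gridInterval n) := by
  intro i j hij
  refine disjoint_left.2 fun x hi hj => hij ?_
  have hn : 0 < n := i.pos
  exact Fin.ext (((mem_gridInterval_iff hn).1 hi).2.symm.trans ((mem_gridInterval_iff hn).1 hj).2)

theorem iUnion_gridInterval (hn : 0 < n) : ⋃ i, gridInterval n i = Ico 0 1 := by
  refine (iUnion_subset gridInterval_subset_Ico).antisymm fun x hx => mem_iUnion.2 ?_
  have hn' : (0 : ℝ) < n := by exact_mod_cast hn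
  have hlt : ⌊x * n⌋₊ < n := (Nat.floor_lt (by nlinarith [hx.1])).2 (by nlinarith [hx.2])
  exact ⟨⟨_, hlt⟩, (mem_gridInterval_iff hn).2 ⟨hx.1, rfl⟩⟩

theorem measurableSet_gridCell (i j : Fin n) : MeasurableSet (gridCell n i j) :=
  (measurableSet_gridInterval i).prod (measurableSet_gridInterval j)

theorem pairwise_disjoint_gridCell :
    Pairwise (Disjoint on fun k : Fin n × Fin n => gridCell n k.1 k.2) := by
  intro k l hkl
  rw [onFun, gridCell_eq_prod, gridCell_eq_prod, disjoint_prod]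
  rcases not_and_or.1 (mt Prod.ext_iff.2 hkl) with h | h
  · exact .inl (pairwise_disjoint_gridInterval h)
  · exact .inr (pairwise_disjoint_gridInterval h)

end gridInterval

theorem integral_eq_sum_measureReal_smul {α E κ : Type*} [MeasurableSpace α]
    [NormedAddCommGroup E] [NormedSpace ℝ E] [CompleteSpace E] [Fintype κ] {μ : Measure α}
    [IsFiniteMeasure μ]
    {s : κ → Set α} (hs : ∀ k, MeasurableSet (s k)) (hd : Pairwise (Disjoint on s))
    (hcover : ∀ᵐ x ∂μ, x ∈ ⋃ k, s k) {f : α → E} {c : κ → E}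
    (hf : ∀ k, ∀ x ∈ s k, f x = c k) :
    ∫ x, f x ∂μ = ∑ k, μ.real (s k) • c k := by
  have hfc (k : κ) : ∫ x in s k, f x ∂μ = ∫ x in s k, c k ∂μ :=
    setIntegral_congr_fun (hs k) (hf k)
  have hint (k : κ) : IntegrableOn f (s k) μ :=
    (integrableOn_const (measure_ne_top μ _)).congr_fun (fun x hx => (hf k x hx).symm) (hs k)
  simp only [integral_eq_setIntegral hcover, integral_iUnion_fintype hs hd hint, hfc,
    setIntegral_const]

namespace IsCopulaMeasure

variable {μ : Measure (ℝ × ℝ)}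

theorem ae_fst_mem (hμ : IsCopulaMeasure μ) : ∀ᵐ p ∂μ, p.1 ∈ Ico (0 : ℝ) 1 :=
  (ae_map_iff measurable_fst.aemeasurable measurableSet_Ico).1
    (hμ.2.1 ▸ ae_restrict_mem measurableSet_Ico)

theorem ae_snd_mem (hμ : IsCopulaMeasure μ) : ∀ᵐ p ∂μ, p.2 ∈ Ico (0 : ℝ) 1 :=
  (ae_map_iff measurable_snd.aemeasurable measurableSet_Ico).1
    (hμ.2.2 ▸ ae_restrict_mem measurableSet_Ico)

theorem swap (hμ : IsCopulaMeasure μ) : IsCopulaMeasure (μ.map Prod.swap) := by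
  have : IsProbabilityMeasure μ := hμ.1
  refine ⟨Measure.isProbabilityMeasure_map measurable_swap.aemeasurable, ?_, ?_⟩
  · rw [Measure.map_map measurable_fst measurable_swap]
    exact hμ.2.2
  · rw [Measure.map_map measurable_snd measurable_swap]
    exact hμ.2.1

theorem measure_prod_Ico {s : Set ℝ} (hμ : IsCopulaMeasure μ) (hs : MeasurableSet s)
    (hs01 : s ⊆ Ico 0 1) : μ (s ×ˢ Ico 0 1) = volume s := by
  have hnull : μ (Prod.snd ⁻¹' Ico (0 : ℝ) 1)ᶜ = 0 := ae_iff.1 hμ.ae_snd_mem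
  rw [prod_eq, measure_inter_conull hnull, ← Measure.map_apply measurable_fst hs, hμ.2.1,
    Measure.restrict_eq_self _ hs01]

variable {n : ℕ}

theorem sum_measureReal_gridCell_row (hμ : IsCopulaMeasure μ) (hn : 0 < n) (i : Fin n) :
    ∑ j, μ.real (gridCell n i j) = 1 / n := by
  have : IsProbabilityMeasure μ := hμ.1
  have hd : Pairwise (Disjoint on gridCell n i) :=
    fun j k hjk => disjoint_prod.2 (.inr (pairwise_disjoint_gridInterval hjk))
  rw [← measureReal_iUnion_fintype hd (measurableSet_gridCell i)]
  simp only [gridCell_eq_prod]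
  rw [← prod_iUnion, iUnion_gridInterval hn, measureReal_def,
    hμ.measure_prod_Ico (measurableSet_gridInterval i) (gridInterval_subset_Ico i),
    volume_gridInterval, ENNReal.toReal_ofReal (by positivity)]

theorem sum_measureReal_gridCell_col (hμ : IsCopulaMeasure μ) (hn : 0 < n) (j : Fin n) :
    ∑ i, μ.real (gridCell n i j) = 1 / n := by
  rw [← hμ.swap.sum_measureReal_gridCell_row hn j]
  refine Finset.sum_congr rfl fun i _ => ?_
  rw [map_measureReal_apply measurable_swap (measurableSet_gridCell j i), gridCell_eq_prod,
    gridCell_eq_prod, preimage_swap_prod]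

theorem smul_measureReal_gridCell_mem_doublyStochastic (hμ : IsCopulaMeasure μ) (hn : 0 < n) :
    (n : ℝ) • Matrix.of (fun i j => μ.real (gridCell n i j)) ∈ doublyStochastic ℝ (Fin n) := by
  have hn' : (n : ℝ) ≠ 0 := by positivity
  refine mem_doublyStochastic_iff_sum.2
    ⟨fun i j => mul_nonneg (Nat.cast_nonneg n) measureReal_nonneg, fun i => ?_, fun j => ?_⟩
  · simp [← Finset.mul_sum, hμ.sum_measureReal_gridCell_row hn, hn']
  · simp [← Finset.mul_sum, hμ.sum_measureReal_gridCell_col hn, hn']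

theorem ae_mem_iUnion_gridCell (hμ : IsCopulaMeasure μ) (hn : 0 < n) :
    ∀ᵐ p ∂μ, p ∈ ⋃ k : Fin n × Fin n, gridCell n k.1 k.2 := by
  simp only [gridCell_eq_prod, iUnion_prod, iUnion_gridInterval hn]
  filter_upwards [hμ.ae_fst_mem, hμ.ae_snd_mem] with p h1 h2 using ⟨h1, h2⟩

end IsCopulaMeasure

theorem stmt_0 (n : ℕ) (hn : 1 ≤ n) (a : Fin n → Fin n → ℝ) (f : ℝ × ℝ → ℝ)
    (hf : ∀ i j : Fin n, ∀ p ∈ gridCell n i j, f p = a i j)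
    (μ : Measure (ℝ × ℝ)) (hμ : IsCopulaMeasure μ) :
    ∫ p, f p ∂μ ≤ (1 / n : ℝ) * ⨆ π : Equiv.Perm (Fin n), ∑ i, a i (π i) := by
  have : IsProbabilityMeasure μ := hμ.1
  have hn0 : 0 < n := hn
  have hn' : (n : ℝ) ≠ 0 := by positivity
  have hint : ∫ p, f p ∂μ = ∑ i, ∑ j, a i j * μ.real (gridCell n i j) := by
    rw [integral_eq_sum_measureReal_smul (s := fun k : Fin n × Fin n => gridCell n k.1 k.2)
      (c := fun k => a k.1 k.2) (fun k => measurableSet_gridCell k.1 k.2)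
      pairwise_disjoint_gridCell (hμ.ae_mem_iUnion_gridCell hn0) (fun k => hf k.1 k.2),
      Fintype.sum_prod_type]
    simp only [smul_eq_mul, mul_comm]
  calc ∫ p, f p ∂μ
      = 1 / n * ∑ i, ∑ j,
          a i j * ((n : ℝ) • Matrix.of fun i j => μ.real (gridCell n i j)) i j := by
        simp only [hint, Matrix.smul_apply, Matrix.of_apply, smul_eq_mul, Finset.mul_sum]
        field_simp
    _ ≤ 1 / n * ⨆ π : Equiv.Perm (Fin n), ∑ i, a i (π i) :=
        mul_le_mul_of_nonneg_left (sum_sum_mul_le_iSup_perm_of_mem_doublyStochastic a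
          (hμ.smul_measureReal_gridCell_mem_doublyStochastic hn0)) (by positivity)
end

section
/- Let f be a real-valued function on [0,1]² that is Lipschitz continuous with constant L with respect to the Euclidean metric, and for n ≥ 1 let f̲_n and f̄_n be its dyadic lower and upper approximations on the uniform 2^n × 2^n grid. Then |sup over copula measures μ of ∫_{[0,1)²} f̄_n dμ − sup over copula measures μ of ∫_{[0,1)²} f̲_n dμ| ≤ L · √2 / 2^n. -/
/-!
On a dyadic cell of side `2⁻ⁿ` the values of `f̄ₙ` and `f̲ₙ` are the maximum and minimum of `f`
over a square of diameter `√2 / 2ⁿ`, so `f̲ₙ ≤ f̄ₙ ≤ f̲ₙ + L √2 / 2ⁿ` on `[0,1)²`. A copula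
measure is carried by `[0,1)²`, where both are finite step functions, so the same inequalities
hold between `∫ f̲ₙ dμ` and `∫ f̄ₙ dμ` for every copula `μ`, and they pass to the
suprema.
-/

open MeasureTheory Set

lemma mem_Ico_div_iff_floor_eq {m : ℕ} (hm : 0 < m) {x : ℝ} (hx : 0 ≤ x) {k : ℕ} :
    x ∈ Ico ((k : ℝ) / m) (((k : ℝ) + 1) / m) ↔ ⌊x * m⌋₊ = k := by
  have hm' : (0 : ℝ) < m := by exact_mod_cast hm
  rw [Nat.floor_eq_iff (by positivity), mem_Ico, div_le_iff₀ hm', lt_div_iff₀ hm']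

lemma exists_mem_Ico_div {m : ℕ} (hm : 0 < m) {x : ℝ} (hx : x ∈ Ico (0 : ℝ) 1) :
    ∃ i : Fin m, x ∈ Ico (((i : ℕ) : ℝ) / m) ((((i : ℕ) : ℝ) + 1) / m) := by
  have hm' : (0 : ℝ) < m := by exact_mod_cast hm
  have hlt : ⌊x * m⌋₊ < m := (Nat.floor_lt (by nlinarith [hx.1])).2 (by nlinarith [hx.2])
  exact ⟨⟨_, hlt⟩, (mem_Ico_div_iff_floor_eq hm hx.1).2 rfl⟩

lemma exists_mem_gridCell {m : ℕ} (hm : 0 < m) {p : ℝ × ℝ}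
    (hp : p ∈ Ico (0 : ℝ) 1 ×ˢ Ico (0 : ℝ) 1) : ∃ i j : Fin m, p ∈ gridCell m i j := by
  obtain ⟨i, hi⟩ := exists_mem_Ico_div hm hp.1
  obtain ⟨j, hj⟩ := exists_mem_Ico_div hm hp.2
  exact ⟨i, j, hi, hj⟩

lemma eq_of_mem_gridCell {m : ℕ} {i j i' j' : Fin m} {p : ℝ × ℝ}
    (h : p ∈ gridCell m i j) (h' : p ∈ gridCell m i' j') : i = i' ∧ j = j' := by
  have hx : 0 ≤ p.1 := le_trans (by positivity) h.1.1
  have hy : 0 ≤ p.2 := le_trans (by positivity) h.2.1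
  constructor <;> apply Fin.ext
  · rw [← (mem_Ico_div_iff_floor_eq i.pos hx).1 h.1, (mem_Ico_div_iff_floor_eq i.pos hx).1 h'.1]
  · rw [← (mem_Ico_div_iff_floor_eq i.pos hy).1 h.2, (mem_Ico_div_iff_floor_eq i.pos hy).1 h'.2]

lemma closedCell_subset_unitSquare {m : ℕ} (i j : Fin m) :
    closedCell m i j ⊆ Icc (0 : ℝ) 1 ×ˢ Icc (0 : ℝ) 1 := by
  have hm : (0 : ℝ) < m := by exact_mod_cast i.pos
  have hIcc : ∀ k : Fin m, Icc (((k : ℕ) : ℝ) / m) ((((k : ℕ) : ℝ) + 1) / m) ⊆ Icc 0 1 := by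
    intro k
    refine Icc_subset_Icc (by positivity) ((div_le_one hm).2 ?_)
    exact_mod_cast k.2
  exact prod_mono (hIcc i) (hIcc j)

lemma abs_sub_le_of_mem_Icc_div {m k : ℕ} {u v : ℝ}
    (hu : u ∈ Icc ((k : ℝ) / m) (((k : ℝ) + 1) / m))
    (hv : v ∈ Icc ((k : ℝ) / m) (((k : ℝ) + 1) / m)) : |u - v| ≤ 1 / m := by
  have h := abs_sub_le_of_le_of_le hu.1 hu.2 hv.1 hv.2
  rwa [← sub_div, add_sub_cancel_left] at h

lemma dist_le_of_mem_closedCell {m : ℕ} {i j : Fin m} {a b : ℝ × ℝ}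
    (ha : a ∈ closedCell m i j) (hb : b ∈ closedCell m i j) :
    √((a.1 - b.1) ^ 2 + (a.2 - b.2) ^ 2) ≤ √2 / m := by
  have hm : (0 : ℝ) < m := by exact_mod_cast i.pos
  have hsq : ∀ {u v : ℝ}, |u - v| ≤ 1 / m → (u - v) ^ 2 ≤ (1 / m) ^ 2 := fun h => by
    rw [← sq_abs]
    exact pow_le_pow_left₀ (abs_nonneg _) h 2
  rw [Real.sqrt_le_left (by positivity), div_pow, Real.sq_sqrt zero_le_two]
  linarith [show (2 : ℝ) / m ^ 2 = (1 / m) ^ 2 + (1 / m) ^ 2 by ring,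
    hsq (abs_sub_le_of_mem_Icc_div ha.1 hb.1), hsq (abs_sub_le_of_mem_Icc_div ha.2 hb.2)]

lemma sub_le_of_mem_closedCell {f : ℝ × ℝ → ℝ} {L : ℝ} (hL : 0 ≤ L)
    (hlip : ∀ p ∈ Icc (0:ℝ) 1 ×ˢ Icc (0:ℝ) 1, ∀ q ∈ Icc (0:ℝ) 1 ×ˢ Icc (0:ℝ) 1,
      |f p - f q| ≤ L * √((p.1 - q.1) ^ 2 + (p.2 - q.2) ^ 2))
    {m : ℕ} {i j : Fin m} {a b : ℝ × ℝ} (ha : a ∈ closedCell m i j) (hb : b ∈ closedCell m i j) :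
    f a - f b ≤ L * √2 / m := calc
  f a - f b ≤ L * √((a.1 - b.1) ^ 2 + (a.2 - b.2) ^ 2) :=
    (le_abs_self _).trans (hlip a (closedCell_subset_unitSquare i j ha) b
      (closedCell_subset_unitSquare i j hb))
  _ ≤ L * (√2 / m) := mul_le_mul_of_nonneg_left (dist_le_of_mem_closedCell ha hb) hL
  _ = L * √2 / m := (mul_div_assoc _ _ _).symm

noncomputable def gridStep (m : ℕ) (v : Fin m → Fin m → ℝ) (p : ℝ × ℝ) : ℝ :=
  ∑ ij : Fin m × Fin m, (gridCell m ij.1 ij.2).indicator (fun _ => v ij.1 ij.2) p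

lemma gridStep_apply_of_mem {m : ℕ} (v : Fin m → Fin m → ℝ) {i j : Fin m} {p : ℝ × ℝ}
    (hp : p ∈ gridCell m i j) : gridStep m v p = v i j := by
  rw [gridStep, Fintype.sum_eq_single (i, j), indicator_of_mem hp]
  intro ij hij
  refine indicator_of_notMem (fun hp' => hij ?_) _
  obtain ⟨h₁, h₂⟩ := eq_of_mem_gridCell hp' hp
  exact Prod.ext h₁ h₂

lemma integrable_gridStep (m : ℕ) (v : Fin m → Fin m → ℝ) (μ : Measure (ℝ × ℝ))
    [IsFiniteMeasure μ] : Integrable (gridStep m v) μ :=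
  integrable_finsetSum _ fun _ _ =>
    (integrable_const _).indicator (measurableSet_Ico.prod measurableSet_Ico)

namespace IsCopulaMeasure

variable {μ : Measure (ℝ × ℝ)}

lemma ae_mem_unitSquare (hμ : IsCopulaMeasure μ) :
    ∀ᵐ p ∂μ, p ∈ Ico (0 : ℝ) 1 ×ˢ Ico (0 : ℝ) 1 := by
  have h₁ : ∀ᵐ p ∂μ, p.1 ∈ Ico (0 : ℝ) 1 :=
    ae_of_ae_map measurable_fst.aemeasurable (hμ.2.1 ▸ ae_restrict_mem measurableSet_Ico)
  have h₂ : ∀ᵐ p ∂μ, p.2 ∈ Ico (0 : ℝ) 1 :=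
    ae_of_ae_map measurable_snd.aemeasurable (hμ.2.2 ▸ ae_restrict_mem measurableSet_Ico)
  filter_upwards [h₁, h₂] with p hp₁ hp₂ using ⟨hp₁, hp₂⟩

lemma ae_eq_gridStep (hμ : IsCopulaMeasure μ) {m : ℕ} (hm : 0 < m) {g : ℝ × ℝ → ℝ}
    {v : Fin m → Fin m → ℝ} (hg : ∀ i j, ∀ p ∈ gridCell m i j, g p = v i j) :
    g =ᵐ[μ] gridStep m v := by
  filter_upwards [hμ.ae_mem_unitSquare] with p hp
  obtain ⟨i, j, hij⟩ := exists_mem_gridCell hm hp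
  rw [hg i j p hij, gridStep_apply_of_mem v hij]

lemma integral_le_integral_add_of_gridCell (hμ : IsCopulaMeasure μ) {m : ℕ} (hm : 0 < m)
    {g h : ℝ × ℝ → ℝ} {v w : Fin m → Fin m → ℝ} {c : ℝ}
    (hg : ∀ i j, ∀ p ∈ gridCell m i j, g p = v i j)
    (hh : ∀ i j, ∀ p ∈ gridCell m i j, h p = w i j)
    (hgh : ∀ i j, ∀ p ∈ gridCell m i j, g p ≤ h p + c) :
    ∫ p, g p ∂μ ≤ ∫ p, h p ∂μ + c := by
  have := hμ.1
  have hgi : Integrable g μ := (integrable_gridStep m v μ).congr (hμ.ae_eq_gridStep hm hg).symm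
  have hhi : Integrable h μ := (integrable_gridStep m w μ).congr (hμ.ae_eq_gridStep hm hh).symm
  have hle : g ≤ᵐ[μ] fun p => h p + c := by
    filter_upwards [hμ.ae_mem_unitSquare] with p hp
    obtain ⟨i, j, hij⟩ := exists_mem_gridCell hm hp
    exact hgh i j p hij
  calc ∫ p, g p ∂μ ≤ ∫ p, (h p + c) ∂μ := integral_mono_ae hgi (hhi.add (integrable_const c)) hle
    _ = ∫ p, h p ∂μ + c := by simp [integral_add hhi (integrable_const c)]

end IsCopulaMeasure

/-- Also valid when the sets are empty or unbounded, where `sSup` takes the junk value `0`. -/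
lemma abs_sSup_sub_sSup_le {ι : Type*} {P : ι → Prop} {F G : ι → ℝ} {c : ℝ} (hc : 0 ≤ c)
    (hGF : ∀ i, P i → G i ≤ F i) (hFG : ∀ i, P i → F i ≤ G i + c) :
    |sSup {x | ∃ i, P i ∧ x = F i} - sSup {x | ∃ i, P i ∧ x = G i}| ≤ c := by
  set A := {x | ∃ i, P i ∧ x = F i}
  set B := {x | ∃ i, P i ∧ x = G i}
  obtain ⟨i₀, hi₀⟩ | hempty := em (∃ i, P i)
  · by_cases hB : BddAbove B
    · have hA : BddAbove A := by
        obtain ⟨M, hM⟩ := hB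
        refine ⟨M + c, ?_⟩
        rintro _ ⟨i, hi, rfl⟩
        linarith [hFG i hi, hM ⟨i, hi, rfl⟩]
      have hBA : sSup B ≤ sSup A := by
        refine csSup_le ⟨_, i₀, hi₀, rfl⟩ ?_
        rintro _ ⟨i, hi, rfl⟩
        exact (hGF i hi).trans (le_csSup hA ⟨i, hi, rfl⟩)
      have hAB : sSup A ≤ sSup B + c := by
        refine csSup_le ⟨_, i₀, hi₀, rfl⟩ ?_
        rintro _ ⟨i, hi, rfl⟩
        linarith [hFG i hi, le_csSup hB ⟨i, hi, rfl⟩]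
      rw [abs_sub_le_iff]
      constructor <;> linarith
    · have hA : ¬BddAbove A := by
        rintro ⟨M, hM⟩
        refine hB ⟨M, ?_⟩
        rintro _ ⟨i, hi, rfl⟩
        exact (hGF i hi).trans (hM ⟨i, hi, rfl⟩)
      simpa [Real.sSup_of_not_bddAbove hA, Real.sSup_of_not_bddAbove hB] using hc
  · push Not at hempty
    have hA : A = ∅ := eq_empty_of_forall_notMem fun _ ⟨i, hi, _⟩ => hempty i hi
    have hB : B = ∅ := eq_empty_of_forall_notMem fun _ ⟨i, hi, _⟩ => hempty i hi
    simpa [hA, hB] using hc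

theorem stmt_13_general (f : ℝ × ℝ → ℝ) (L : ℝ)
    (hlip : ∀ p ∈ Icc (0:ℝ) 1 ×ˢ Icc (0:ℝ) 1, ∀ q ∈ Icc (0:ℝ) 1 ×ˢ Icc (0:ℝ) 1,
      |f p - f q| ≤ L * Real.sqrt ((p.1 - q.1) ^ 2 + (p.2 - q.2) ^ 2))
    (n : ℕ) (fl fu : ℝ × ℝ → ℝ)
    (hfl : ∀ i j : Fin (2 ^ n), ∀ p ∈ gridCell (2 ^ n) i j,
      IsLeast (f '' closedCell (2 ^ n) i j) (fl p))
    (hfu : ∀ i j : Fin (2 ^ n), ∀ p ∈ gridCell (2 ^ n) i j,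
      IsGreatest (f '' closedCell (2 ^ n) i j) (fu p)) :
    |sSup {x : ℝ | ∃ μ : Measure (ℝ × ℝ), IsCopulaMeasure μ ∧ x = ∫ p, fu p ∂μ} -
      sSup {x : ℝ | ∃ μ : Measure (ℝ × ℝ), IsCopulaMeasure μ ∧ x = ∫ p, fl p ∂μ}| ≤
      L * Real.sqrt 2 / 2 ^ n := by
  have hm : 0 < 2 ^ n := by positivity
  have hL : 0 ≤ L := by
    simpa using (abs_nonneg _).trans (hlip (0, 0) (by simp) (1, 0) (by simp))
  have hosc : ∀ i j, ∀ p ∈ gridCell (2 ^ n) i j, fu p ≤ fl p + L * √2 / 2 ^ n := by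
    intro i j p hp
    obtain ⟨a, ha, hfa⟩ := (hfu i j p hp).1
    obtain ⟨b, hb, hfb⟩ := (hfl i j p hp).1
    have hab := sub_le_of_mem_closedCell hL hlip ha hb
    push_cast at hab
    linarith
  have hfu_eq : ∀ i j, ∀ p ∈ gridCell (2 ^ n) i j, fu p = sSup (f '' closedCell (2 ^ n) i j) :=
    fun i j p hp => (hfu i j p hp).csSup_eq.symm
  have hfl_eq : ∀ i j, ∀ p ∈ gridCell (2 ^ n) i j, fl p = sInf (f '' closedCell (2 ^ n) i j) :=
    fun i j p hp => (hfl i j p hp).csInf_eq.symm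
  refine abs_sSup_sub_sSup_le (by positivity) (fun μ hμ => ?_) (fun μ hμ => ?_)
  · simpa using hμ.integral_le_integral_add_of_gridCell hm hfl_eq hfu_eq (c := 0)
      fun i j p hp => by simpa using (hfl i j p hp).2 (hfu i j p hp).1
  · exact hμ.integral_le_integral_add_of_gridCell hm hfu_eq hfl_eq hosc

theorem stmt_13 (f : ℝ × ℝ → ℝ) (L : ℝ)
    (hlip : ∀ p ∈ Icc (0:ℝ) 1 ×ˢ Icc (0:ℝ) 1, ∀ q ∈ Icc (0:ℝ) 1 ×ˢ Icc (0:ℝ) 1,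
      |f p - f q| ≤ L * Real.sqrt ((p.1 - q.1) ^ 2 + (p.2 - q.2) ^ 2))
    (n : ℕ) (hn : 1 ≤ n) (fl fu : ℝ × ℝ → ℝ)
    (hfl : ∀ i j : Fin (2 ^ n), ∀ p ∈ gridCell (2 ^ n) i j,
      IsLeast (f '' closedCell (2 ^ n) i j) (fl p))
    (hfu : ∀ i j : Fin (2 ^ n), ∀ p ∈ gridCell (2 ^ n) i j,
      IsGreatest (f '' closedCell (2 ^ n) i j) (fu p)) :
    |sSup {x : ℝ | ∃ μ : Measure (ℝ × ℝ), IsCopulaMeasure μ ∧ x = ∫ p, fu p ∂μ} -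
      sSup {x : ℝ | ∃ μ : Measure (ℝ × ℝ), IsCopulaMeasure μ ∧ x = ∫ p, fl p ∂μ}| ≤
      L * Real.sqrt 2 / 2 ^ n :=
  stmt_13_general f L hlip n fl fu hfl hfu
end

section
/- Define f' : [0,1) → [0,1] by f'(x) = 3/4 − x for x ∈ [0, 3/4) and f'(x) = x for x ∈ [3/4, 1), and let μ' be the pushforward of Lebesgue measure on [0,1) under the map x ↦ (x, f'(x)). Then μ' is a copula measure and ∫_{[0,1)²} sin(π(x + y)) dμ'(x,y) = ∫_0^1 sin(π(x + f'(x))) dx = 3/(4√2) − 1/(2π). In particular, sup over copula measures μ of ∫_{[0,1)²} sin(π(x+y)) dμ ≥ 3/(4√2) − 1/(2π). -/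
open MeasureTheory Set Real

/-- The support function of the shuffle of `M` with partition `(0, 3/4, 1)`,
antidiagonal on the first square and diagonal on the second. -/
noncomputable def fprime (x : ℝ) : ℝ := if x < 3 / 4 then 3 / 4 - x else x

/-!
`fprime` preserves Lebesgue measure on `[0,1)`: it is the reflection `x ↦ 3/4 - x` of `[0,3/4)`
onto `(0,3/4]` and the identity on `[3/4,1)`. Hence the image of Lebesgue measure under the graph
map `x ↦ (x, fprime x)` has uniform marginals. Along the graph, `sin (π (x + fprime x))` is the
constant `sin (3π/4) = √2/2` on `[0,3/4)` and equals `sin (2πx)` on `[3/4,1)`, which contributes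
`-1/(2π)`. As `sin ≤ 1`, the copula integrals are bounded above by `1`, so their supremum
dominates the value attained here.
-/

lemma map_ite_sub_restrict_Ico {a b : ℝ} (ha : 0 ≤ a) (hab : a ≤ b) :
    (volume.restrict (Ico 0 b)).map (fun x => if x < a then a - x else x) =
      volume.restrict (Ico 0 b) := by
  have hmeas : Measurable fun x : ℝ => if x < a then a - x else x :=
    Measurable.ite measurableSet_Iio (measurable_const.sub measurable_id) measurable_id
  have hdisj : Disjoint (Ico 0 a) (Ico a b) := Ico_disjoint_Ico_same
  rw [← Ico_union_Ico_eq_Ico ha hab, Measure.restrict_union hdisj measurableSet_Ico,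
    Measure.map_add _ _ hmeas]
  congr 1
  · have hreflect : Ico 0 a = (fun x => a - x) ⁻¹' Ioc 0 a := by
      ext x; simp only [mem_Ico, mem_preimage, mem_Ioc]; constructor <;> intro h <;>
        constructor <;> linarith [h.1, h.2]
    have hsub : (fun x => if x < a then a - x else x) =ᵐ[volume.restrict (Ico 0 a)]
        fun x => a - x :=
      ae_restrict_of_forall_mem measurableSet_Ico fun x hx => if_pos hx.2
    rw [Measure.map_congr hsub]
    conv_lhs => rw [hreflect]
    rw [((volume.measurePreserving_sub_left a).restrict_preimage measurableSet_Ioc).map_eq]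
    exact (Measure.restrict_congr_set Ioc_ae_eq_Icc).trans
      (Measure.restrict_congr_set Ico_ae_eq_Icc).symm
  · have hid : (fun x => if x < a then a - x else x) =ᵐ[volume.restrict (Ico a b)] id :=
      ae_restrict_of_forall_mem measurableSet_Ico fun x hx => if_neg (not_lt.2 hx.1)
    rw [Measure.map_congr hid, Measure.map_id]

@[fun_prop]
lemma measurable_fprime : Measurable fprime :=
  Measurable.ite measurableSet_Iio (measurable_const.sub measurable_id) measurable_id

lemma map_fprime_restrict_Ico :
    (volume.restrict (Ico (0:ℝ) 1)).map fprime = volume.restrict (Ico (0:ℝ) 1) :=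
  map_ite_sub_restrict_Ico (by norm_num) (by norm_num)

lemma isCopulaMeasure_map_graph {f : ℝ → ℝ} (hf : Measurable f)
    (hpres : (volume.restrict (Ico (0:ℝ) 1)).map f = volume.restrict (Ico (0:ℝ) 1)) :
    IsCopulaMeasure ((volume.restrict (Ico (0:ℝ) 1)).map (fun x => (x, f x))) := by
  have hgraph : Measurable fun x => (x, f x) := measurable_id.prodMk hf
  have : IsProbabilityMeasure (volume.restrict (Ico (0:ℝ) 1)) := ⟨by simp⟩
  refine ⟨Measure.isProbabilityMeasure_map hgraph.aemeasurable, ?_, ?_⟩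
  · rw [Measure.map_map measurable_fst hgraph]
    exact Measure.map_id
  · rw [Measure.map_map measurable_snd hgraph]
    exact hpres

lemma integral_sin_le_one {α : Type*} [MeasurableSpace α] (μ : Measure α)
    [IsProbabilityMeasure μ] (g : α → ℝ) : ∫ p, sin (g p) ∂μ ≤ 1 := by
  calc ∫ p, sin (g p) ∂μ ≤ ‖∫ p, sin (g p) ∂μ‖ := le_abs_self _
    _ ≤ 1 * μ.real univ :=
        norm_integral_le_of_norm_le_const (.of_forall fun p => abs_sin_le_one _)
    _ = 1 := by simp

lemma sin_pi_mul_add_fprime_of_lt {x : ℝ} (hx : x < 3 / 4) :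
    sin (π * (x + fprime x)) = √2 / 2 := by
  rw [fprime, if_pos hx, show π * (x + (3 / 4 - x)) = π - π / 4 by ring, sin_pi_sub,
    sin_pi_div_four]

lemma sin_pi_mul_add_fprime_of_le {x : ℝ} (hx : 3 / 4 ≤ x) :
    sin (π * (x + fprime x)) = sin (2 * π * x) := by
  rw [fprime, if_neg (not_lt.2 hx)]
  ring_nf

lemma integral_sin_two_pi_mul_Ico :
    ∫ x in Ico (3 / 4 : ℝ) 1, sin (2 * π * x) = -(1 / (2 * π)) := by
  rw [setIntegral_congr_set Ico_ae_eq_Ioc, ← intervalIntegral.integral_of_le (by norm_num),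
    intervalIntegral.integral_comp_mul_left (fun y => sin y) (by positivity), integral_sin,
    show 2 * π * (3 / 4) = π / 2 + π by ring, cos_add_pi, cos_pi_div_two, mul_one,
    cos_two_pi, smul_eq_mul]
  field_simp
  norm_num

lemma integral_sin_pi_mul_add_fprime :
    ∫ x in Ico (0:ℝ) 1, sin (π * (x + fprime x)) = 3 / (4 * √2) - 1 / (2 * π) := by
  have hint : IntegrableOn (fun x => sin (π * (x + fprime x))) (Ico 0 1) :=
    Measure.integrableOn_of_bounded (M := 1) (by simp) (by fun_prop)
      (.of_forall fun x => abs_sin_le_one _)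
  rw [← Ico_union_Ico_eq_Ico (by norm_num : (0:ℝ) ≤ 3 / 4) (by norm_num : (3 / 4 : ℝ) ≤ 1),
    setIntegral_union Ico_disjoint_Ico_same measurableSet_Ico
      (hint.mono_set (Ico_subset_Ico_right (by norm_num)))
      (hint.mono_set (Ico_subset_Ico_left (by norm_num))),
    setIntegral_congr_fun measurableSet_Ico fun x hx => sin_pi_mul_add_fprime_of_lt hx.2,
    setIntegral_congr_fun measurableSet_Ico fun x hx => sin_pi_mul_add_fprime_of_le hx.1,
    integral_sin_two_pi_mul_Ico, setIntegral_const]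
  have hsqrt : √2 * √2 = 2 := mul_self_sqrt (by norm_num)
  rw [Measure.real, Real.volume_Ico, ENNReal.toReal_ofReal (by norm_num), smul_eq_mul]
  field_simp
  linear_combination 3 * π * hsqrt

theorem stmt_14 :
    IsCopulaMeasure ((volume.restrict (Ico (0:ℝ) 1)).map (fun x => (x, fprime x))) ∧
    ∫ p, Real.sin (Real.pi * (p.1 + p.2))
        ∂((volume.restrict (Ico (0:ℝ) 1)).map (fun x => (x, fprime x))) =
      ∫ x in Ico (0:ℝ) 1, Real.sin (Real.pi * (x + fprime x)) ∧
    ∫ x in Ico (0:ℝ) 1, Real.sin (Real.pi * (x + fprime x)) =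
      3 / (4 * Real.sqrt 2) - 1 / (2 * Real.pi) ∧
    3 / (4 * Real.sqrt 2) - 1 / (2 * Real.pi) ≤
      sSup {x : ℝ | ∃ μ : Measure (ℝ × ℝ), IsCopulaMeasure μ ∧
        x = ∫ p, Real.sin (Real.pi * (p.1 + p.2)) ∂μ} := by
  have hcopula := isCopulaMeasure_map_graph measurable_fprime map_fprime_restrict_Ico
  have hgraph : ∫ p, sin (π * (p.1 + p.2))
      ∂((volume.restrict (Ico (0:ℝ) 1)).map (fun x => (x, fprime x))) =
        ∫ x in Ico (0:ℝ) 1, sin (π * (x + fprime x)) :=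
    integral_map (measurable_id.prodMk measurable_fprime).aemeasurable (by fun_prop)
  refine ⟨hcopula, hgraph, integral_sin_pi_mul_add_fprime, le_csSup ⟨1, ?_⟩
    ⟨_, hcopula, (hgraph.trans integral_sin_pi_mul_add_fprime).symm⟩⟩
  rintro _ ⟨μ, ⟨hμ, -, -⟩, rfl⟩
  exact integral_sin_le_one μ _
end

section
/- Let (x_k)_{k≥1} be a uniformly distributed sequence in [0,1), i.e., for every 0 ≤ a ≤ b ≤ 1 the averages (1/N) ∑_{k=1}^N 1_{[a,b)}(x_k) converge to b − a as N → ∞. Let n ≥ 1, let π be a permutation of {1,…,n}, and let T_π : [0,1) → [0,1) be the shuffle map defined by T_π(x) = x + (π(i) − i)/n for x ∈ [(i−1)/n, i/n). Then the sequence (T_π(x_k))_{k≥1} is also uniformly distributed in [0,1). -/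
open MeasureTheory Set

/-!
On the cell `[i/n, (i+1)/n)` the shuffle map is the translation by `cᵢ = (π i - i)/n`, so for
`y ∈ [0,1)` we have `T y ∈ [a, b)` iff `y` lies in one of the `n` intervals
`[i/n, (i+1)/n) ∩ [a - cᵢ, b - cᵢ)`. The frequencies of `[a, b)` along `T xₖ` are therefore sums
of frequencies of intervals along `xₖ` and converge to the sum of their lengths. Translated by
`cᵢ`, these intervals become `[π i/n, (π i+1)/n) ∩ [a, b)`, which tile `[a, b)`, so the lengths
add up to `b - a`.
-/

open Filter Topology

noncomputable def empiricalFreq (x : ℕ → ℝ) (S : Set ℝ) (N : ℕ) : ℝ :=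
  1 / (N : ℝ) * ∑ k ∈ Finset.range N, S.indicator (fun _ => (1 : ℝ)) (x k)

lemma empiricalFreq_eq_sum {ι : Type*} {x y : ℕ → ℝ} {S : Set ℝ} {s : Finset ι}
    {P : ι → Set ℝ}
    (h : ∀ k, S.indicator (fun _ => (1 : ℝ)) (y k) = ∑ i ∈ s, (P i).indicator (fun _ => 1) (x k)) :
    empiricalFreq y S = fun N => ∑ i ∈ s, empiricalFreq x (P i) N := by
  funext N
  simp only [empiricalFreq, h, ← Finset.mul_sum]
  rw [Finset.sum_comm]

lemma tendsto_empiricalFreq_Ico {x : ℕ → ℝ}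
    (hud : ∀ a b : ℝ, 0 ≤ a → a ≤ b → b ≤ 1 →
      Tendsto (empiricalFreq x (Ico a b)) atTop (𝓝 (b - a)))
    {a b : ℝ} (ha : 0 ≤ a) (hb : b ≤ 1) :
    Tendsto (empiricalFreq x (Ico a b)) atTop (𝓝 (max (b - a) 0)) := by
  rcases le_or_gt a b with hab | hba
  · rw [max_eq_left (sub_nonneg.2 hab)]
    exact hud a b ha hab hb
  · have hfreq : empiricalFreq x (Ico a b) = 0 := by
      funext N
      simp [empiricalFreq, Ico_eq_empty_of_le hba.le]
    rw [hfreq, max_eq_right (sub_nonpos.2 hba.le)]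
    exact tendsto_const_nhds

def cell (n i : ℕ) : Set ℝ := Ico ((i : ℝ) / n) (((i : ℝ) + 1) / n)

lemma mem_cell_iff {n : ℕ} (hn : 0 < n) {y : ℝ} (hy : 0 ≤ y) {i : ℕ} :
    y ∈ cell n i ↔ ⌊y * n⌋₊ = i := by
  have hn' : (0 : ℝ) < n := by exact_mod_cast hn
  rw [Nat.floor_eq_iff (by positivity), cell, mem_Ico, div_le_iff₀ hn', lt_div_iff₀ hn']

lemma cell_inter_preimage_add_Ico (n i : ℕ) (c a b : ℝ) :
    cell n i ∩ (· + c) ⁻¹' Ico a b =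
      Ico (max ((i : ℝ) / n) (a - c)) (min (((i : ℝ) + 1) / n) (b - c)) := by
  rw [cell, preimage_add_const_Ico, Ico_inter_Ico]

lemma indicator_comp_eq_sum_indicator_cell {n : ℕ} (hn : 0 < n) {T : ℝ → ℝ} (c : Fin n → ℝ)
    (hT : ∀ i : Fin n, ∀ y ∈ cell n i, T y = y + c i) (S : Set ℝ) {y : ℝ} (hy : y ∈ Ico 0 1) :
    S.indicator (fun _ => (1 : ℝ)) (T y) =
      ∑ i : Fin n, (cell n i ∩ (· + c i) ⁻¹' S).indicator (fun _ => 1) y := by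
  have hlt : ⌊y * n⌋₊ < n :=
    (Nat.floor_lt (mul_nonneg hy.1 n.cast_nonneg)).2 (mul_lt_of_lt_one_left (by positivity) hy.2)
  set i : Fin n := ⟨⌊y * n⌋₊, hlt⟩
  have hyi : y ∈ cell n i := (mem_cell_iff hn hy.1).2 rfl
  rw [Finset.sum_eq_single i]
  · rw [← indicator_indicator, indicator_of_mem hyi, hT i y hyi]
    rfl
  · intro j _ hji
    refine indicator_of_notMem (fun hyj => hji (Fin.ext ?_)) _
    rw [← (mem_cell_iff hn hy.1).1 hyj.1]
  · exact fun h => (h (Finset.mem_univ i)).elim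

lemma max_min_sub_max_eq_sub_of_le {s t a b : ℝ} (hst : s ≤ t) (hab : a ≤ b) :
    max (min t b - max s a) 0 = min b (max a t) - min b (max a s) := by
  simp only [min_def, max_def]
  split_ifs <;> linarith

lemma sum_length_inter_Ico_of_monotone {s : ℕ → ℝ} (hs : Monotone s) {a b : ℝ} (hab : a ≤ b)
    (n : ℕ) :
    ∑ j ∈ Finset.range n, max (min (s (j + 1)) b - max (s j) a) 0 =
      min b (max a (s n)) - min b (max a (s 0)) := by
  rw [← Finset.sum_range_sub (fun j => min b (max a (s j)))]
  exact Finset.sum_congr rfl fun j _ => max_min_sub_max_eq_sub_of_le (hs j.le_succ) hab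

lemma sum_length_cell_inter_Ico {n : ℕ} (hn : 0 < n) {a b : ℝ} (ha : 0 ≤ a) (hab : a ≤ b)
    (hb : b ≤ 1) :
    ∑ j : Fin n, max (min (((j : ℝ) + 1) / n) b - max ((j : ℝ) / n) a) 0 = b - a := by
  have hmono : Monotone fun j : ℕ => (j : ℝ) / n := fun i j hij =>
    div_le_div_of_nonneg_right (by exact_mod_cast hij) n.cast_nonneg
  have hsum := sum_length_inter_Ico_of_monotone hmono hab n
  push_cast at hsum
  rw [Fin.sum_univ_eq_sum_range
      (fun j : ℕ => max (min (((j : ℝ) + 1) / n) b - max ((j : ℝ) / n) a) 0), hsum,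
    div_self (Nat.cast_pos.2 hn).ne', zero_div, max_eq_right (hab.trans hb), max_eq_left ha,
    min_eq_left hb, min_eq_right hab]

theorem stmt_15 (x : ℕ → ℝ) (hx : ∀ k, x k ∈ Ico (0:ℝ) 1)
    (hud : ∀ a b : ℝ, 0 ≤ a → a ≤ b → b ≤ 1 →
      Filter.Tendsto
        (fun N : ℕ => (1 / (N : ℝ)) * ∑ k ∈ Finset.range N, (Ico a b).indicator (fun _ => (1:ℝ)) (x k))
        Filter.atTop (nhds (b - a)))
    (n : ℕ) (hn : 1 ≤ n) (π : Equiv.Perm (Fin n)) (T : ℝ → ℝ)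
    (hTdef : ∀ i : Fin n, ∀ y ∈ Ico (((i : ℕ) : ℝ) / n) ((((i : ℕ) : ℝ) + 1) / n),
      T y = y + (((π i : ℕ) : ℝ) - ((i : ℕ) : ℝ)) / n) :
    ∀ a b : ℝ, 0 ≤ a → a ≤ b → b ≤ 1 →
      Filter.Tendsto
        (fun N : ℕ => (1 / (N : ℝ)) * ∑ k ∈ Finset.range N, (Ico a b).indicator (fun _ => (1:ℝ)) (T (x k)))
        Filter.atTop (nhds (b - a)) := by
  intro a b ha hab hb
  set c : Fin n → ℝ := fun i => (((π i : ℕ) : ℝ) - i) / n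
  have hpieces : empiricalFreq (T ∘ x) (Ico a b) =
      fun N => ∑ i : Fin n, empiricalFreq x
        (Ico (max (((i : ℕ) : ℝ) / n) (a - c i)) (min ((((i : ℕ) : ℝ) + 1) / n) (b - c i))) N :=
    empiricalFreq_eq_sum fun k => by
      simp only [Function.comp_apply, indicator_comp_eq_sum_indicator_cell hn c hTdef _ (hx k),
        cell_inter_preimage_add_Ico]
  have hshift (i : Fin n) : ((i : ℕ) : ℝ) / n = ((π i : ℕ) : ℝ) / n - c i := by
    simp only [c]; ring
  have hlength : ∑ i : Fin n,
      max (min ((((i : ℕ) : ℝ) + 1) / n) (b - c i) - max (((i : ℕ) : ℝ) / n) (a - c i)) 0 =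
        b - a := by
    rw [← sum_length_cell_inter_Ico hn ha hab hb, ← Equiv.sum_comp π fun j : Fin n =>
      max (min ((((j : ℕ) : ℝ) + 1) / n) b - max (((j : ℕ) : ℝ) / n) a) 0]
    refine Finset.sum_congr rfl fun i _ => ?_
    rw [add_div, hshift, sub_add_eq_add_sub, ← add_div, min_sub_sub_right, max_sub_sub_right,
      sub_sub_sub_cancel_right]
  change Tendsto (empiricalFreq (T ∘ x) (Ico a b)) atTop (𝓝 (b - a))
  rw [hpieces, ← hlength]
  refine tendsto_finsetSum _ fun i _ => tendsto_empiricalFreq_Ico hud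
    (le_max_of_le_left (by positivity)) (min_le_of_left_le ?_)
  rw [div_le_one (by positivity)]
  exact_mod_cast i.2
end
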